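/- Let R be a commutative ring with invertible elements x, y. With notation as in the determinant model (blocks M₊ = !![1−x, −y; −x·y⁻¹, 0], M₋ = !![0, −x⁻¹·y; −y⁻¹, 1−x⁻¹]): let n ≥ 2, ε : Fin n → Bool, and σ a permutation of Fin n × Fin 2 with σ(0,a) ∉ {0} × Fin 2 for all a. Set w = (number of i ≠ 0 with ε(i) true) − (number of i ≠ 0 with ε(i) false). Define Z₊ = (−1)^{w+1} det(M(M₊) − P), Z₋ = (−1)^{w−1} det(M(M₋) − P), and Z₀ = (−1)^{w} det(M₀ − P₀), where M(B) is the block-diagonal matrix with block B at index 0 and blocks M₊/M₋ according to ε at indices i ≠ 0, P is the permutation matrix of σ, and (M₀, P₀) is the smoothed configuration on the crossings i ≠ 0 with permutation σ₀ (σ₀(i,a) = σ(0,b) when σ(i,a) = (0,b), and σ₀(i,a) = σ(i,a) otherwise). Then Z₊ − x · Z₋ = (x − 1) · Z₀. -/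

import Mathlib

/-- The local crossing matrix assigned to a positive classical crossing in the
Jaeger–Kauffman–Saleur determinant model. -/
def Mpos {R : Type*} [CommRing R] (x y : Rˣ) : Matrix (Fin 2) (Fin 2) R :=
  !![1 - (x : R), -(y : R); -((x : R) * ((y⁻¹ : Rˣ) : R)), 0]

/-- The local crossing matrix assigned to a negative classical crossing. -/
def Mneg {R : Type*} [CommRing R] (x y : Rˣ) : Matrix (Fin 2) (Fin 2) R :=
  !![0, -(((x⁻¹ : Rˣ) : R) * (y : R)); -((y⁻¹ : Rˣ) : R), 1 - ((x⁻¹ : Rˣ) : R)]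

/-- The block-diagonal matrix indexed by `ι × Fin 2` whose diagonal `2×2` block at
index `i` is `blk i`. -/
def blockDiag {R : Type*} [CommRing R] {ι : Type*} [DecidableEq ι]
    (blk : ι → Matrix (Fin 2) (Fin 2) R) : Matrix (ι × Fin 2) (ι × Fin 2) R :=
  fun p q => if p.1 = q.1 then blk p.1 p.2 q.2 else 0

/-- The permutation matrix of `σ`: entry `1` at position `(p, σ p)` and `0` elsewhere. -/
def permMat (R : Type*) [CommRing R] {ι : Type*} [DecidableEq ι] (σ : Equiv.Perm ι) :
    Matrix ι ι R :=
  fun p q => if σ p = q then 1 else 0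

/-!
Only the two rows of crossing `0` depend on its block, and `M₊ = x • M₋ + (1 - x) • 1` where
`M₋ - 1` has proportional rows. Subtracting a multiple of one of these rows from the other makes
the determinant affine along this segment, so
`det(M(M₊) - P) = x det(M(M₋) - P) + (1 - x) det(M(1) - P)`.
With the identity block at crossing `0`, which `σ` never maps into itself, the Schur complement of
that block is `M₀ - P₀`: the permutation matrix of the smoothing is `P_JJ + P_J0 P_0J`, because a
strand entering crossing `0` is continued along the strand leaving it. The writhe signs turn the
resulting identity into the skein relation.
-/

namespace Matrix

variable {R ι : Type*} [CommRing R] [Fintype ι] [DecidableEq ι]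

theorem det_smul_add_one_sub_smul_of_proportional_rows {M₀ M₁ : Matrix ι ι R} {p₀ p₁ : ι}
    (hp : p₀ ≠ p₁) (hM : ∀ i, i ≠ p₀ → i ≠ p₁ → M₀ i = M₁ i) (c : R)
    (hc : M₁ p₁ - M₀ p₁ = c • (M₁ p₀ - M₀ p₀)) (t : R) :
    (t • M₁ + (1 - t) • M₀).det = t * M₁.det + (1 - t) * M₀.det := by
  set Mt := t • M₁ + (1 - t) • M₀
  have hMt : ∀ i, Mt i = t • M₁ i + (1 - t) • M₀ i := fun _ => rfl
  -- the row operation `p₁ ↦ p₁ - c • p₀` makes row `p₁` constant along the segment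
  set k := M₀ p₁ - c • M₀ p₀
  set N := M₀.updateRow p₁ k
  have reduce : ∀ M : Matrix ι ι R, (∀ i, i ≠ p₀ → i ≠ p₁ → M i = M₀ i) →
      M p₁ - c • M p₀ = k → M.det = (N.updateRow p₀ (M p₀)).det := by
    intro M hMi hMk
    rw [← det_updateRow_add_smul_self M hp.symm (-c)]
    congr 1
    ext i j
    by_cases h₀ : i = p₀
    · subst h₀; simp [N, updateRow_ne hp]
    by_cases h₁ : i = p₁
    · subst h₁; simp [N, updateRow_ne hp.symm, ← hMk, sub_eq_add_neg]
    · simp [N, updateRow_ne h₀, updateRow_ne h₁, hMi i h₀ h₁]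
  have hk₁ : M₁ p₁ - c • M₁ p₀ = k := by
    linear_combination (norm := module) hc
  have hkt : Mt p₁ - c • Mt p₀ = k := by
    rw [hMt, hMt]
    linear_combination (norm := module) t • hk₁
  rw [reduce Mt (fun i h₀ h₁ => by simp [hMt, ← hM i h₀ h₁, ← add_smul]) hkt,
    reduce M₁ (fun i h₀ h₁ => (hM i h₀ h₁).symm) hk₁, reduce M₀ (fun _ _ _ => rfl) rfl,
    hMt, det_updateRow_add, det_updateRow_smul, det_updateRow_smul]

end Matrix

section

variable {R ι : Type*} [CommRing R] [DecidableEq ι]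

theorem blockDiag_update_smul_add_smul (blk : ι → Matrix (Fin 2) (Fin 2) R) (i₀ : ι)
    (A C : Matrix (Fin 2) (Fin 2) R) (t : R) :
    blockDiag (Function.update blk i₀ (t • A + (1 - t) • C))
      = t • blockDiag (Function.update blk i₀ A)
        + (1 - t) • blockDiag (Function.update blk i₀ C) := by
  ext ⟨i, a⟩ ⟨j, b⟩
  by_cases hij : i = j
  · subst hij
    by_cases hi : i = i₀
    · subst hi; simp [blockDiag]
    · simp [blockDiag, hi, ← add_mul]
  · simp [blockDiag, hij]

theorem blockDiag_update_apply_of_ne (blk : ι → Matrix (Fin 2) (Fin 2) R) {i₀ : ι}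
    (A : Matrix (Fin 2) (Fin 2) R) {p : ι × Fin 2} (hp : p.1 ≠ i₀) :
    blockDiag (Function.update blk i₀ A) p = blockDiag blk p := by
  ext q
  simp [blockDiag, hp]

theorem blockDiag_update_row (blk : ι → Matrix (Fin 2) (Fin 2) R) (i₀ : ι)
    (A : Matrix (Fin 2) (Fin 2) R) (a : Fin 2) :
    blockDiag (Function.update blk i₀ A) (i₀, a) = fun q => if i₀ = q.1 then A a q.2 else 0 := by
  ext q
  by_cases h : i₀ = q.1 <;> simp [blockDiag, h]

variable [Fintype ι]

theorem det_blockDiag_update_smul_add_one_sub_smul_sub (blk : ι → Matrix (Fin 2) (Fin 2) R) (i₀ : ι)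
    (Q : Matrix (ι × Fin 2) (ι × Fin 2) R) {A C : Matrix (Fin 2) (Fin 2) R} (c : R)
    (hAC : (A - C) 1 = c • (A - C) 0) (t : R) :
    (blockDiag (Function.update blk i₀ (t • A + (1 - t) • C)) - Q).det
      = t * (blockDiag (Function.update blk i₀ A) - Q).det
        + (1 - t) * (blockDiag (Function.update blk i₀ C) - Q).det := by
  set M : Matrix (Fin 2) (Fin 2) R → Matrix (ι × Fin 2) (ι × Fin 2) R :=
    fun B => blockDiag (Function.update blk i₀ B) - Q
  have hM : ∀ B p, M B p = blockDiag (Function.update blk i₀ B) p - Q p := fun _ _ => rfl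
  have hrows : ∀ p : ι × Fin 2, p ≠ (i₀, 0) → p ≠ (i₀, 1) → M C p = M A p := by
    rintro ⟨i, a⟩ h₀ h₁
    have hi : i ≠ i₀ := by rintro rfl; fin_cases a <;> simp_all
    simp only [hM, blockDiag_update_apply_of_ne _ _ (show (i, a).1 ≠ i₀ from hi)]
  have hprop : M A (i₀, 1) - M C (i₀, 1) = c • (M A (i₀, 0) - M C (i₀, 0)) := by
    ext q
    have := congrFun hAC q.2
    by_cases h : i₀ = q.1 <;> simp_all [M, blockDiag_update_row]
  rw [← Matrix.det_smul_add_one_sub_smul_of_proportional_rows (by simp) hrows c hprop t]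
  congr 1
  simp only [M, blockDiag_update_smul_add_smul]
  module

end

section

variable {R ι : Type*} [CommRing R] [DecidableEq ι] {i₀ : ι}

/-- `σ₀` is `σ` with crossing `i₀` smoothed: an edge that `σ` sends into crossing `i₀` is sent
on to where `σ` sends it out of `i₀`. -/
def IsSmoothing (σ : Equiv.Perm (ι × Fin 2)) (σ₀ : Equiv.Perm ({i // i ≠ i₀} × Fin 2)) : Prop :=
  ∀ (i : ι) (hi : i ≠ i₀) (a : Fin 2), ((σ₀ (⟨i, hi⟩, a)).1.1, (σ₀ (⟨i, hi⟩, a)).2) =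
    if (σ (i, a)).1 = i₀ then σ (i₀, (σ (i, a)).2) else σ (i, a)

variable {σ : Equiv.Perm (ι × Fin 2)} {σ₀ : Equiv.Perm ({i // i ≠ i₀} × Fin 2)}

theorem permMat_smoothing_apply
    (hσ₀ : IsSmoothing σ σ₀)
    (q q' : {i // i ≠ i₀} × Fin 2) :
    permMat R σ₀ q q' = permMat R σ (q.1.1, q.2) (q'.1.1, q'.2)
      + ∑ b, permMat R σ (q.1.1, q.2) (i₀, b) * permMat R σ (i₀, b) (q'.1.1, q'.2) := by
  obtain ⟨⟨i, hi⟩, a⟩ := q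
  obtain ⟨⟨j, hj⟩, b⟩ := q'
  have hinj : σ₀ (⟨i, hi⟩, a) = (⟨j, hj⟩, b) ↔
      ((σ₀ (⟨i, hi⟩, a)).1.1, (σ₀ (⟨i, hi⟩, a)).2) = (j, b) := by
    simp [Prod.ext_iff, Subtype.ext_iff]
  have h := hσ₀ i hi a
  rcases hk : σ (i, a) with ⟨k, c⟩
  simp only [permMat, hinj, h, hk]
  by_cases hki : k = i₀
  · subst hki
    rw [Fintype.sum_eq_single c fun c' hc' => by simp [hc'.symm]]
    simp [hj.symm]
  · simp [hki]

variable [Fintype ι]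

theorem det_blockDiag_update_one_sub_permMat (blk : ι → Matrix (Fin 2) (Fin 2) R)
    (hσ : ∀ a : Fin 2, (σ (i₀, a)).1 ≠ i₀)
    (hσ₀ : IsSmoothing σ σ₀) :
    (blockDiag (Function.update blk i₀ 1) - permMat R σ).det
      = (blockDiag (fun i : {i // i ≠ i₀} => blk i) - permMat R σ₀).det := by
  set e : Fin 2 ⊕ ({i // i ≠ i₀} × Fin 2) ≃ ι × Fin 2 :=
    optionProdEquiv.symm.trans ((Equiv.optionSubtypeNe i₀).prodCongr (Equiv.refl _))
  set M := (blockDiag (Function.update blk i₀ 1) - permMat R σ).submatrix e e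
  have h11 : M.toBlocks₁₁ = 1 := by
    ext a b
    have hσ' : σ (i₀, a) ≠ (i₀, b) := fun h => hσ a (congrArg Prod.fst h)
    simp [M, e, Matrix.toBlocks₁₁, blockDiag, permMat, Matrix.one_apply, hσ']
  rw [← Matrix.det_submatrix_equiv_self e]
  change M.det = _
  rw [← M.fromBlocks_toBlocks, h11, Matrix.det_fromBlocks_one₁₁]
  congr 1
  ext ⟨⟨i, hi⟩, a⟩ ⟨⟨j, hj⟩, b⟩
  simp [M, e, Matrix.toBlocks₂₁, Matrix.toBlocks₁₂, Matrix.toBlocks₂₂, Matrix.mul_apply, blockDiag,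
    permMat_smoothing_apply hσ₀, hi, hj.symm, sub_sub]

end

section

variable {R : Type*} [CommRing R]

theorem Mpos_eq_smul_Mneg_add (x y : Rˣ) : Mpos x y = (x : R) • Mneg x y + (1 - (x : R)) • 1 := by
  ext a b
  fin_cases a <;> fin_cases b <;> simp [Mpos, Mneg, mul_sub]

theorem Mneg_sub_one_row_one_eq_smul (x y : Rˣ) :
    (Mneg x y - 1) 1 = ((y⁻¹ : Rˣ) : R) • (Mneg x y - 1) 0 := by
  ext b
  fin_cases b <;> simp [Mneg, mul_left_comm]

end

/-- The Conway skein relation in the determinant model, with the writhe signs included: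
`Z₊ − x · Z₋ = (x − 1) · Z₀`, where the crossing being modified sits at index `0`. -/
theorem conway_skein_relation {R : Type*} [CommRing R] (x y : Rˣ)
    (n : ℕ) (hn : 2 ≤ n) (ε : Fin n → Bool) (σ : Equiv.Perm (Fin n × Fin 2)) :
    let i0 : Fin n := ⟨0, by omega⟩
    ∀ (_ : ∀ a : Fin 2, (σ (i0, a)).1 ≠ i0)
      (σ₀ : Equiv.Perm ({i : Fin n // i ≠ i0} × Fin 2))
      (_ : ∀ (i : Fin n) (hi : i ≠ i0) (a : Fin 2),
        ((σ₀ (⟨i, hi⟩, a)).1.1, (σ₀ (⟨i, hi⟩, a)).2) =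
          if (σ (i, a)).1 = i0 then σ (i0, (σ (i, a)).2) else σ (i, a)),
    let w : ℤ := ((Finset.univ.filter fun i : Fin n => i ≠ i0 ∧ ε i = true).card : ℤ)
      - ((Finset.univ.filter fun i : Fin n => i ≠ i0 ∧ ε i = false).card : ℤ)
    let blk : Matrix (Fin 2) (Fin 2) R → Fin n → Matrix (Fin 2) (Fin 2) R :=
      fun B i => if i = i0 then B else if ε i then Mpos x y else Mneg x y
    let P : Matrix (Fin n × Fin 2) (Fin n × Fin 2) R := permMat R σ
    let Zpos : R := (((-1 : Rˣ) ^ (w + 1) : Rˣ) : R) * (blockDiag (blk (Mpos x y)) - P).det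
    let Zneg : R := (((-1 : Rˣ) ^ (w - 1) : Rˣ) : R) * (blockDiag (blk (Mneg x y)) - P).det
    let Zzero : R := (((-1 : Rˣ) ^ w : Rˣ) : R) *
      (blockDiag (fun i : {i : Fin n // i ≠ i0} => if ε i.1 then Mpos x y else Mneg x y)
        - permMat R σ₀).det
    Zpos - (x : R) * Zneg = ((x : R) - 1) * Zzero := by
  intro i0 hσ σ₀ hσ₀ w blk P Zpos Zneg Zzero
  set blk' : Fin n → Matrix (Fin 2) (Fin 2) R := fun i => if ε i then Mpos x y else Mneg x y
  have hblk : ∀ B, blk B = Function.update blk' i0 B := fun B =>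
    funext fun i => (Function.update_apply blk' i0 B i).symm
  have skein : (blockDiag (Function.update blk' i0 (Mpos x y)) - permMat R σ).det
      = (x : R) * (blockDiag (Function.update blk' i0 (Mneg x y)) - permMat R σ).det
        + (1 - (x : R)) * (blockDiag (Function.update blk' i0 1) - permMat R σ).det := by
    rw [Mpos_eq_smul_Mneg_add]
    exact det_blockDiag_update_smul_add_one_sub_smul_sub _ _ _ _
      (Mneg_sub_one_row_one_eq_smul x y) _
  have smooth : (blockDiag (Function.update blk' i0 1) - permMat R σ).det
      = (blockDiag (fun i : {i : Fin n // i ≠ i0} => if ε i.1 then Mpos x y else Mneg x y)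
        - permMat R σ₀).det :=
    det_blockDiag_update_one_sub_permMat blk' hσ hσ₀
  have sign_succ : (((-1 : Rˣ) ^ (w + 1) : Rˣ) : R) = -(((-1 : Rˣ) ^ w : Rˣ) : R) := by
    simp [zpow_add_one]
  have sign_pred : (((-1 : Rˣ) ^ (w - 1) : Rˣ) : R) = -(((-1 : Rˣ) ^ w : Rˣ) : R) := by
    simp [zpow_sub_one]
  simp only [Zpos, Zneg, Zzero, P, hblk, sign_succ, sign_pred, skein, smooth]
  ring
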